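/- Under the same assumptions (U ∈ C³ with ‖D²U‖ ≤ L, ‖D³U‖ ≤ L_H, L(T² + Th) ≤ 1/6, T/h ∈ ℕ), the map Φ defined by q̃_T(x,v) = q̃_T(y,Φ(v)) satisfies ‖DΦ(v) − I_d‖ ≤ (1/2) min(1, 11 L_H T² ‖x − y‖) for all v ∈ ℝ^d. -/

import Mathlib

/-!
On the grid `h ℕ` the interpolants `q̃, w̃` follow the velocity Verlet recursion. Velocity Jacobians
of Verlet trajectories, differences of two trajectories and differences of two Jacobians all satisfy
this same linear recursion, with a forcing that is `L`-Lipschitz in the position up to an error; a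
discrete Gronwall estimate under `L T² ≤ 1/6` bounds each of them. For `A = D₂q̃_T(x, v)` and
`A' = D₂q̃_T(y, Φ v)` this gives `‖A' − T‖ ≤ T/10` and, since the coupled trajectories stay
`(22/9) ‖x − y‖`-close, `‖A − A'‖ ≤ min (T/5, C L_H T³ ‖x − y‖)`. Differentiating
`q̃_T(x, v) = q̃_T(y, Φ v)` gives `A = A' DΦ`, i.e. `T (DΦ − I) = (A − A') + (T − A') (DΦ − I)`,
so `(9/10) T ‖DΦ − I‖ ≤ ‖A − A'‖`.
-/

open MeasureTheory intervalIntegral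

noncomputable def gridFloor (h t : ℝ) : ℝ := h * ⌊t / h⌋
noncomputable def gridCeil (h t : ℝ) : ℝ := h * ⌈t / h⌉

open Set

section VerletRecursion

variable {X : Type*} [SeminormedAddCommGroup X] [NormedSpace ℝ X]

def IsVerletRecursion (h : ℝ) (a b F : ℕ → X) : Prop :=
  ∀ k, a (k + 1) = a k + h • b k - (h ^ 2 / 2) • F k ∧
    b (k + 1) = b k - (h / 2) • (F k + F (k + 1))

variable {h : ℝ} {a b F a' b' F' : ℕ → X}

theorem IsVerletRecursion.sub (hr : IsVerletRecursion h a b F)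
    (hr' : IsVerletRecursion h a' b' F') :
    IsVerletRecursion h (fun k => a k - a' k) (fun k => b k - b' k)
      (fun k => F k - F' k) := fun k => by
  obtain ⟨ha, hb⟩ := hr k
  obtain ⟨ha', hb'⟩ := hr' k
  constructor <;> dsimp only
  · rw [ha, ha']; module
  · rw [hb, hb']; module

theorem IsVerletRecursion.sub_affine (hr : IsVerletRecursion h a b F) (c d : X) :
    IsVerletRecursion h (fun k => a k - (c + (k * h) • d)) (fun k => b k - d) F := fun k => by
  obtain ⟨ha, hb⟩ := hr k
  constructor <;> dsimp only
  · rw [ha]; push_cast; module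
  · rw [hb]; abel

theorem IsVerletRecursion.norm_le (hr : IsVerletRecursion h a b F) {L e : ℝ} {N : ℕ}
    (hh : 0 ≤ h) (hL : 0 ≤ L) (hsmall : L * (N * h) ^ 2 ≤ 1 / 6) (ha0 : a 0 = 0) (hb0 : b 0 = 0)
    (hF : ∀ k ≤ N, ‖F k‖ ≤ L * ‖a k‖ + e) :
    ∀ k ≤ N, ‖a k‖ ≤ 3 / 5 * e * (k * h) ^ 2 ∧ ‖b k‖ ≤ 6 / 5 * e * (k * h) := by
  have he : 0 ≤ e := by
    have := (norm_nonneg _).trans (hF 0 (Nat.zero_le N))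
    rwa [ha0, norm_zero, mul_zero, zero_add] at this
  -- `L (k h)² ≤ 1/6` turns the bound on `a k` into `‖F k‖ ≤ 11/10 e`; with it the constants
  -- `3/5` and `6/5` reproduce themselves.
  have hF' : ∀ k ≤ N, ‖a k‖ ≤ 3 / 5 * e * (k * h) ^ 2 → ‖F k‖ ≤ 11 / 10 * e := by
    intro k hk hak
    have hkN : L * (k * h) ^ 2 ≤ 1 / 6 := by
      have : (k * h) ^ 2 ≤ (N * h) ^ 2 := by gcongr
      nlinarith
    nlinarith [hF k hk, mul_le_mul_of_nonneg_left hak hL]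
  intro k
  induction k with
  | zero => simp [ha0, hb0]
  | succ k ih =>
    intro hk
    obtain ⟨hak, hbk⟩ := ih (by omega)
    have hFk := hF' k (by omega) hak
    obtain ⟨hrec_a, hrec_b⟩ := hr k
    have hak1 : ‖a (k + 1)‖ ≤ 3 / 5 * e * ((k + 1 : ℕ) * h) ^ 2 :=
      calc ‖a (k + 1)‖ ≤ ‖a k‖ + h * ‖b k‖ + h ^ 2 / 2 * ‖F k‖ := by
            rw [hrec_a]
            refine (norm_sub_le _ _).trans ?_
            rw [norm_smul_of_nonneg (by positivity)]
            gcongr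
            exact (norm_add_le _ _).trans_eq (by rw [norm_smul_of_nonneg hh])
        _ ≤ 3 / 5 * e * (k * h) ^ 2 + h * (6 / 5 * e * (k * h)) + h ^ 2 / 2 * (11 / 10 * e) := by
            gcongr
        _ ≤ 3 / 5 * e * ((k + 1 : ℕ) * h) ^ 2 := by
            push_cast; nlinarith [mul_nonneg he (sq_nonneg h)]
    refine ⟨hak1, ?_⟩
    have hFk1 := hF' (k + 1) hk hak1
    calc ‖b (k + 1)‖ ≤ ‖b k‖ + h / 2 * (‖F k‖ + ‖F (k + 1)‖) := by
          rw [hrec_b]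
          refine (norm_sub_le _ _).trans ?_
          rw [norm_smul_of_nonneg (by positivity)]
          gcongr
          exact norm_add_le _ _
      _ ≤ 6 / 5 * e * (k * h) + h / 2 * (11 / 10 * e + 11 / 10 * e) := by gcongr
      _ ≤ 6 / 5 * e * ((k + 1 : ℕ) * h) := by
          push_cast; nlinarith [mul_nonneg he hh]

end VerletRecursion

section Grid

variable {h s : ℝ}

theorem gridFloor_eq_of_mem_Ioo (hh : 0 < h) {k : ℤ} (hs : s ∈ Ioo (k * h) (k * h + h)) :
    gridFloor h s = k * h := by
  have : ⌊s / h⌋ = k := by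
    rw [Int.floor_eq_iff, le_div_iff₀ hh, div_lt_iff₀ hh]
    constructor <;> linarith [hs.1, hs.2]
  rw [gridFloor, this, mul_comm]

theorem gridCeil_eq_of_mem_Ioo (hh : 0 < h) {k : ℤ} (hs : s ∈ Ioo (k * h) (k * h + h)) :
    gridCeil h s = k * h + h := by
  have : ⌈s / h⌉ = k + 1 := by
    rw [Int.ceil_eq_iff, lt_div_iff₀ hh, div_le_iff₀ hh]
    push_cast
    constructor <;> linarith [hs.1, hs.2]
  rw [gridCeil, this]
  push_cast
  ring

end Grid

section IntegralEquations

variable {E : Type*} [NormedAddCommGroup E] [NormedSpace ℝ E]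

theorem sub_eq_smul_integral_of_eq_add_smul_integral {F f : ℝ → E} {c : E} {r a b : ℝ}
    (hF : ∀ t, F t = c + r • ∫ s in (0 : ℝ)..t, f s) (ha : IntervalIntegrable f volume 0 a)
    (hb : IntervalIntegrable f volume 0 b) :
    F b - F a = r • ∫ s in a..b, f s := by
  rw [hF, hF, ← integral_interval_sub_left hb ha, smul_sub]
  abel

theorem integral_sub_sub_smul [CompleteSpace E] (a h : ℝ) (w c : E) :
    ∫ s in a..a + h, (w - (s - a) • c) = h • w - (h ^ 2 / 2) • c := by
  have hlin : ∫ s in a..a + h, (s - a) = h ^ 2 / 2 := by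
    simp [integral_comp_sub_right fun s => s]
  have hc : Continuous fun s : ℝ => (s - a) • c := by fun_prop
  rw [intervalIntegral.integral_sub intervalIntegrable_const (hc.intervalIntegrable _ _),
    intervalIntegral.integral_const, intervalIntegral.integral_smul_const, hlin,
    add_sub_cancel_left]

theorem isVerletRecursion_of_eq_integral [CompleteSpace E] (g : E → E) {h : ℝ} (hh : 0 < h)
    {Q W : ℝ → E} {x v : E}
    (hQ : ∀ t, Q t = x + ∫ s in (0 : ℝ)..t,
      (W (gridFloor h s) - (s - gridFloor h s) • g (Q (gridFloor h s))))
    (hW : ∀ t, W t = v - (1 / 2 : ℝ) • ∫ s in (0 : ℝ)..t,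
      (g (Q (gridFloor h s)) + g (Q (gridCeil h s)))) :
    IsVerletRecursion h (fun k : ℕ => Q (k * h)) (fun k => W (k * h)) (fun k => g (Q (k * h))) := by
  set f := fun s => W (gridFloor h s) - (s - gridFloor h s) • g (Q (gridFloor h s)) with hf_def
  set f' := fun s => g (Q (gridFloor h s)) + g (Q (gridCeil h s)) with hf'_def
  have hsucc : ∀ k : ℕ, ((k + 1 : ℕ) : ℝ) * h = k * h + h := fun k => by push_cast; ring
  have hmem : ∀ k : ℕ, ∀ s ∈ uIoo ((k : ℝ) * h) ((k + 1 : ℕ) * h),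
      s ∈ Ioo (((k : ℤ) : ℝ) * h) (((k : ℤ) : ℝ) * h + h) := fun k s hs => by
    rw [Int.cast_natCast]
    rwa [hsucc, uIoo_of_le (by linarith)] at hs
  have hf : ∀ k : ℕ, EqOn (fun s => W (k * h) - (s - k * h) • g (Q (k * h))) f
      (uIoo ((k : ℝ) * h) ((k + 1 : ℕ) * h)) := fun k s hs => by
    simp only [hf_def, gridFloor_eq_of_mem_Ioo hh (hmem k s hs), Int.cast_natCast]
  have hf' : ∀ k : ℕ, EqOn (fun _ => g (Q (k * h)) + g (Q ((k + 1 : ℕ) * h))) f'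
      (uIoo ((k : ℝ) * h) ((k + 1 : ℕ) * h)) := fun k s hs => by
    simp only [hf'_def, gridFloor_eq_of_mem_Ioo hh (hmem k s hs),
      gridCeil_eq_of_mem_Ioo hh (hmem k s hs), Int.cast_natCast, hsucc]
  have hint : ∀ k : ℕ, IntervalIntegrable f volume 0 (k * h) := fun k => by
    simpa using IntervalIntegrable.trans_iterate (a := fun j : ℕ => (j : ℝ) * h) (n := k)
      fun j _ => (Continuous.intervalIntegrable (by fun_prop) _ _).congr_uIoo (hf j)
  have hint' : ∀ k : ℕ, IntervalIntegrable f' volume 0 (k * h) := fun k => by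
    simpa using IntervalIntegrable.trans_iterate (a := fun j : ℕ => (j : ℝ) * h) (n := k)
      fun j _ => intervalIntegrable_const.congr_uIoo (hf' j)
  have hQ' : ∀ t, Q t = x + (1 : ℝ) • ∫ s in (0 : ℝ)..t, f s := by simpa using hQ
  have hW' : ∀ t, W t = v + (-(1 / 2) : ℝ) • ∫ s in (0 : ℝ)..t, f' s := by
    simpa [neg_smul, ← sub_eq_add_neg] using hW
  intro k
  have hQk := sub_eq_smul_integral_of_eq_add_smul_integral hQ' (hint k) (hint (k + 1))
  have hWk := sub_eq_smul_integral_of_eq_add_smul_integral hW' (hint' k) (hint' (k + 1))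
  rw [← integral_congr_uIoo (hf k), hsucc, integral_sub_sub_smul, one_smul] at hQk
  rw [← integral_congr_uIoo (hf' k), intervalIntegral.integral_const, hsucc,
    add_sub_cancel_left] at hWk
  rw [sub_eq_iff_eq_add'] at hQk hWk
  dsimp only
  rw [hsucc]
  constructor
  · rw [hQk]; abel
  · rw [hWk]; module

end IntegralEquations

section Derivative

variable {P E : Type*} [NormedAddCommGroup P] [NormedSpace ℝ P] [NormedAddCommGroup E]
  [NormedSpace ℝ E] {g : E → E} {g' : E → E →L[ℝ] E} {h : ℝ} {Q V : P → ℕ → E} {p : P}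

theorem hasFDerivAt_position_succ (hg : ∀ z, HasFDerivAt g (g' z) z)
    (hrec : ∀ p, IsVerletRecursion h (Q p) (V p) (fun k => g (Q p k))) {k : ℕ}
    (hQ : DifferentiableAt ℝ (Q · k) p) (hV : DifferentiableAt ℝ (V · k) p) :
    HasFDerivAt (Q · (k + 1)) (fderiv ℝ (Q · k) p + h • fderiv ℝ (V · k) p
      - (h ^ 2 / 2) • (g' (Q p k)).comp (fderiv ℝ (Q · k) p)) p := by
  have hfun : (Q · (k + 1)) = fun p => Q p k + h • V p k - (h ^ 2 / 2) • g (Q p k) :=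
    funext fun p => (hrec p k).1
  rw [hfun]
  exact (hQ.hasFDerivAt.add (hV.hasFDerivAt.const_smul h)).sub
    (((hg _).comp p hQ.hasFDerivAt).const_smul _)

theorem hasFDerivAt_velocity_succ (hg : ∀ z, HasFDerivAt g (g' z) z)
    (hrec : ∀ p, IsVerletRecursion h (Q p) (V p) (fun k => g (Q p k))) {k : ℕ}
    (hQ : DifferentiableAt ℝ (Q · k) p) (hQ₁ : DifferentiableAt ℝ (Q · (k + 1)) p)
    (hV : DifferentiableAt ℝ (V · k) p) :
    HasFDerivAt (V · (k + 1)) (fderiv ℝ (V · k) p - (h / 2) •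
      ((g' (Q p k)).comp (fderiv ℝ (Q · k) p)
        + (g' (Q p (k + 1))).comp (fderiv ℝ (Q · (k + 1)) p))) p := by
  have hfun : (V · (k + 1)) = fun p => V p k - (h / 2) • (g (Q p k) + g (Q p (k + 1))) :=
    funext fun p => (hrec p k).2
  rw [hfun]
  exact hV.hasFDerivAt.sub ((((hg _).comp p hQ.hasFDerivAt).add
    ((hg _).comp p hQ₁.hasFDerivAt)).const_smul _)

theorem differentiableAt_of_isVerletRecursion (hg : ∀ z, HasFDerivAt g (g' z) z)
    (hrec : ∀ p, IsVerletRecursion h (Q p) (V p) (fun k => g (Q p k)))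
    (hQ₀ : DifferentiableAt ℝ (Q · 0) p) (hV₀ : DifferentiableAt ℝ (V · 0) p) :
    ∀ k, DifferentiableAt ℝ (Q · k) p ∧ DifferentiableAt ℝ (V · k) p := by
  intro k
  induction k with
  | zero => exact ⟨hQ₀, hV₀⟩
  | succ k ih =>
    have hQ₁ := (hasFDerivAt_position_succ hg hrec ih.1 ih.2).differentiableAt
    exact ⟨hQ₁, (hasFDerivAt_velocity_succ hg hrec ih.1 hQ₁ ih.2).differentiableAt⟩

theorem isVerletRecursion_fderiv (hg : ∀ z, HasFDerivAt g (g' z) z)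
    (hrec : ∀ p, IsVerletRecursion h (Q p) (V p) (fun k => g (Q p k)))
    (hQ₀ : DifferentiableAt ℝ (Q · 0) p) (hV₀ : DifferentiableAt ℝ (V · 0) p) :
    IsVerletRecursion h (fun k => fderiv ℝ (Q · k) p) (fun k => fderiv ℝ (V · k) p)
      (fun k => (g' (Q p k)).comp (fderiv ℝ (Q · k) p)) := fun k => by
  have hd := differentiableAt_of_isVerletRecursion hg hrec hQ₀ hV₀
  exact ⟨(hasFDerivAt_position_succ hg hrec (hd k).1 (hd k).2).fderiv,
    (hasFDerivAt_velocity_succ hg hrec (hd k).1 (hd (k + 1)).1 (hd k).2).fderiv⟩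

theorem isVerletRecursion_fderiv_velocity {Q V : E → ℕ → E} {x : E}
    (hg : ∀ z, HasFDerivAt g (g' z) z)
    (hrec : ∀ u, IsVerletRecursion h (Q u) (V u) (fun k => g (Q u k)))
    (hQ₀ : ∀ u, Q u 0 = x) (hV₀ : ∀ u, V u 0 = u) (u : E) :
    IsVerletRecursion h (fun k => fderiv ℝ (Q · k) u) (fun k => fderiv ℝ (V · k) u)
        (fun k => (g' (Q u k)).comp (fderiv ℝ (Q · k) u)) ∧
      fderiv ℝ (Q · 0) u = 0 ∧ fderiv ℝ (V · 0) u = 1 :=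
  ⟨isVerletRecursion_fderiv hg hrec (by simp [hQ₀]) (by simp [hV₀]),
    by simp [hQ₀], by simp [hV₀, ContinuousLinearMap.one_def]⟩

end Derivative

section Estimates

variable {E : Type*} [NormedAddCommGroup E] [NormedSpace ℝ E] {h L : ℝ} {N : ℕ}

theorem norm_smul_one_le {c : ℝ} (hc : 0 ≤ c) : ‖c • (1 : E →L[ℝ] E)‖ ≤ c := by
  rw [norm_smul, Real.norm_of_nonneg hc]
  exact mul_le_of_le_one_right hc ContinuousLinearMap.norm_id_le

theorem IsVerletRecursion.norm_sub_smul_one_le {A B H : ℕ → E →L[ℝ] E}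
    (hr : IsVerletRecursion h A B (fun k => (H k).comp (A k))) (hh : 0 ≤ h)
    (hH : ∀ k, ‖H k‖ ≤ L) (hsmall : L * (N * h) ^ 2 ≤ 1 / 6) (hA₀ : A 0 = 0) (hB₀ : B 0 = 1) :
    ∀ k ≤ N, ‖A k - (k * h) • 1‖ ≤ N * h / 10 := by
  have hL : 0 ≤ L := (norm_nonneg _).trans (hH 0)
  have hT : 0 ≤ N * h := by positivity
  have hgron := (hr.sub_affine 0 1).norm_le (e := L * (N * h)) hh hL hsmall
    (by simp [hA₀]) (by simp [hB₀]) fun k hk => by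
      have hkT : (k : ℝ) * h ≤ N * h := by gcongr
      calc ‖(H k).comp (A k)‖ ≤ L * (‖A k - (0 + (k * h) • 1)‖ + k * h) := by
            refine (ContinuousLinearMap.opNorm_comp_le _ _).trans (mul_le_mul (hH k) ?_
              (norm_nonneg _) hL)
            calc ‖A k‖ ≤ ‖A k - (0 + (k * h) • 1)‖ + ‖(k * h) • (1 : E →L[ℝ] E)‖ := by
                  simpa using norm_le_norm_sub_add (A k) ((k * h) • 1)
              _ ≤ _ := by gcongr; exact norm_smul_one_le (by positivity)
        _ ≤ L * ‖A k - (0 + (k * h) • 1)‖ + L * (N * h) := by nlinarith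
  intro k hk
  have hkT : ((k : ℝ) * h) ^ 2 ≤ (N * h) ^ 2 := by gcongr
  have := (hgron k hk).1
  rw [zero_add] at this
  nlinarith [mul_le_mul_of_nonneg_left hkT (mul_nonneg hL hT)]

theorem IsVerletRecursion.norm_sub_le_of_norm_sub_le {A B H A' B' H' : ℕ → E →L[ℝ] E} {M : ℝ}
    (hr : IsVerletRecursion h A B (fun k => (H k).comp (A k)))
    (hr' : IsVerletRecursion h A' B' (fun k => (H' k).comp (A' k))) (hh : 0 ≤ h)
    (hH : ∀ k, ‖H k‖ ≤ L) (hH' : ∀ k, ‖H' k‖ ≤ L) (hHH' : ∀ k ≤ N, ‖H k - H' k‖ ≤ M)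
    (hsmall : L * (N * h) ^ 2 ≤ 1 / 6) (hA₀ : A 0 = 0) (hB₀ : B 0 = 1) (hA₀' : A' 0 = 0)
    (hB₀' : B' 0 = 1) :
    ‖A N - A' N‖ ≤ 33 / 50 * M * (N * h) ^ 3 := by
  have hL : 0 ≤ L := (norm_nonneg _).trans (hH 0)
  have hA' : ∀ k ≤ N, ‖A' k‖ ≤ 11 / 10 * (N * h) := fun k hk => by
    have hkT : (k : ℝ) * h ≤ N * h := by gcongr
    have := hr'.norm_sub_smul_one_le hh hH' hsmall hA₀' hB₀' k hk
    linarith [norm_le_norm_sub_add (A' k) ((k * h) • 1),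
      norm_smul_one_le (E := E) (by positivity : 0 ≤ (k : ℝ) * h)]
  have hgron := (hr.sub hr').norm_le (e := M * (11 / 10 * (N * h))) hh hL hsmall
    (by simp [hA₀, hA₀']) (by simp [hB₀, hB₀']) fun k hk => by
      have hsplit : (H k).comp (A k) - (H' k).comp (A' k)
          = (H k).comp (A k - A' k) + (H k - H' k).comp (A' k) := by
        rw [ContinuousLinearMap.comp_sub, ContinuousLinearMap.sub_comp]; abel
      rw [hsplit]
      refine (norm_add_le _ _).trans (add_le_add ?_ ?_)
      · exact (ContinuousLinearMap.opNorm_comp_le _ _).trans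
          (mul_le_mul_of_nonneg_right (hH k) (norm_nonneg _))
      · exact (ContinuousLinearMap.opNorm_comp_le _ _).trans
          (mul_le_mul (hHH' k hk) (hA' k hk) (norm_nonneg _) ((norm_nonneg _).trans (hHH' k hk)))
  calc ‖A N - A' N‖ ≤ 3 / 5 * (M * (11 / 10 * (N * h))) * (N * h) ^ 2 := (hgron N le_rfl).1
    _ = 33 / 50 * M * (N * h) ^ 3 := by ring

theorem IsVerletRecursion.norm_sub_le_of_eq_at {g : E → E} {Q V Q' V' : ℕ → E}
    (hr : IsVerletRecursion h Q V (fun k => g (Q k)))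
    (hr' : IsVerletRecursion h Q' V' (fun k => g (Q' k))) (hh : 0 ≤ h) (hL : 0 ≤ L)
    (hg : ∀ a b, ‖g a - g b‖ ≤ L * ‖a - b‖) (hsmall : L * (N * h) ^ 2 ≤ 1 / 6)
    (hQN : Q N = Q' N) :
    ∀ k ≤ N, ‖Q k - Q' k‖ ≤ 22 / 9 * ‖Q 0 - Q' 0‖ := by
  set δ := Q 0 - Q' 0
  set ν := V 0 - V' 0
  set K := ‖δ‖ + N * h * ‖ν‖
  have hT : 0 ≤ N * h := by positivity
  have hfree : ∀ k ≤ N, ‖Q k - Q' k‖ ≤ ‖Q k - Q' k - (δ + (k * h) • ν)‖ + K := fun k hk => by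
    have hkT : (k : ℝ) * h ≤ N * h := by gcongr
    have := norm_le_norm_sub_add (Q k - Q' k) (δ + (k * h) • ν)
    have := norm_add_le δ ((k * h) • ν)
    rw [norm_smul, Real.norm_of_nonneg (by positivity)] at this
    nlinarith [norm_nonneg ν]
  have hgron := ((hr.sub hr').sub_affine δ ν).norm_le (e := L * K) hh hL hsmall
    (by simp [δ]) (by simp [ν]) fun k hk => (hg _ _).trans (by nlinarith [hfree k hk])
  have hdev : ∀ k ≤ N, ‖Q k - Q' k - (δ + (k * h) • ν)‖ ≤ K / 10 := fun k hk => by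
    have hkT : ((k : ℝ) * h) ^ 2 ≤ (N * h) ^ 2 := by gcongr
    have hK : 0 ≤ K := by positivity
    nlinarith [(hgron k hk).1, mul_le_mul_of_nonneg_left hkT (mul_nonneg hL hK)]
  have hν : N * h * ‖ν‖ ≤ 11 / 9 * ‖δ‖ := by
    have hN := hdev N le_rfl
    rw [hQN, sub_self, zero_sub, norm_neg] at hN
    have := norm_sub_le (δ + (N * h) • ν) δ
    rw [add_sub_cancel_left, norm_smul, Real.norm_of_nonneg hT] at this
    linarith
  intro k hk
  linarith [hfree k hk, hdev k hk]

theorem norm_sub_one_le_of_eq_comp {A A' S : E →L[ℝ] E} {T : ℝ} (hA : A = A'.comp S)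
    (hA' : ‖A' - T • 1‖ ≤ T / 10) :
    9 / 10 * T * ‖S - 1‖ ≤ ‖A - A'‖ := by
  have hid : T • (S - 1) = (A - A') + (T • 1 - A').comp (S - 1) := by
    rw [hA]
    simp only [ContinuousLinearMap.sub_comp, ContinuousLinearMap.comp_sub,
      ContinuousLinearMap.smul_comp, ContinuousLinearMap.one_def, ContinuousLinearMap.id_comp,
      ContinuousLinearMap.comp_id, smul_sub]
    abel
  have hnorm : ‖(T • 1 - A').comp (S - 1)‖ ≤ T / 10 * ‖S - 1‖ :=
    (ContinuousLinearMap.opNorm_comp_le _ _).trans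
      (mul_le_mul_of_nonneg_right (by rwa [norm_sub_rev]) (norm_nonneg _))
  have hT : T * ‖S - 1‖ ≤ ‖T • (S - 1)‖ := by
    rw [norm_smul]
    exact mul_le_mul_of_nonneg_right (Real.le_norm_self T) (norm_nonneg _)
  rw [hid] at hT
  linarith [norm_add_le (A - A') ((T • 1 - A').comp (S - 1))]

end Estimates

theorem norm_sub_le_mul_of_lipschitz {E F : Type*} [SeminormedAddCommGroup E]
    [SeminormedAddCommGroup F] {G : E → F} {LH c : ℝ}
    (hG : ∀ z z', ‖G z - G z'‖ ≤ LH * ‖z - z'‖) {a b x y : E} (hab : ‖a - b‖ ≤ c * ‖x - y‖) :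
    ‖G a - G b‖ ≤ c * (LH * ‖x - y‖) := by
  rcases le_or_gt 0 LH with hLH | hLH
  · nlinarith [hG a b, mul_le_mul_of_nonneg_left hab hLH]
  · have hxy : ‖x - y‖ = 0 := by nlinarith [hG x y, norm_nonneg (x - y), norm_nonneg (G x - G y)]
    have hab' : ‖a - b‖ = 0 := le_antisymm (by simpa [hxy] using hab) (norm_nonneg _)
    simpa [hxy, hab'] using hG a b

section Matching

variable {E : Type*} [NormedAddCommGroup E] [NormedSpace ℝ E]

theorem norm_sub_one_le_of_verlet_matching {g : E → E} {g' : E → E →L[ℝ] E} {L LH h : ℝ}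
    {N : ℕ} (hg : ∀ z, HasFDerivAt g (g' z) z) (hL : ∀ z, ‖g' z‖ ≤ L)
    (hLH : ∀ z z', ‖g' z - g' z'‖ ≤ LH * ‖z - z'‖) (hT : 0 < N * h)
    (hsmall : L * (N * h) ^ 2 ≤ 1 / 6) {Q V : E → E → ℕ → E}
    (hrec : ∀ z u, IsVerletRecursion h (Q z u) (V z u) (fun k => g (Q z u k)))
    (hQ₀ : ∀ z u, Q z u 0 = z) (hV₀ : ∀ z u, V z u 0 = u) {x y : E} {Φ : E → E}
    {S : E →L[ℝ] E} {v : E} (hS : HasFDerivAt Φ S v) (hΦ : ∀ u, Q x u N = Q y (Φ u) N) :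
    ‖S - 1‖ ≤ 1 / 2 * min 1 (11 * LH * (N * h) ^ 2 * ‖x - y‖) := by
  have hh : 0 ≤ h := (pos_of_mul_pos_right hT (Nat.cast_nonneg N)).le
  have hL0 : 0 ≤ L := (norm_nonneg _).trans (hL x)
  have hlip : ∀ a b, ‖g a - g b‖ ≤ L * ‖a - b‖ := fun a b =>
    Convex.norm_image_sub_le_of_norm_hasFDerivWithin_le (fun z _ => (hg z).hasFDerivWithinAt)
      (fun z _ => hL z) convex_univ (mem_univ b) (mem_univ a)
  obtain ⟨hjx, hAx₀, hBx₀⟩ := isVerletRecursion_fderiv_velocity hg (hrec x) (hQ₀ x) (hV₀ x) v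
  obtain ⟨hjy, hAy₀, hBy₀⟩ :=
    isVerletRecursion_fderiv_velocity hg (hrec y) (hQ₀ y) (hV₀ y) (Φ v)
  have hcomp : fderiv ℝ (Q x · N) v = (fderiv ℝ (Q y · N) (Φ v)).comp S := by
    have hd := (differentiableAt_of_isVerletRecursion hg (hrec y) (p := Φ v) (by simp [hQ₀])
      (by simp [hV₀]) N).1
    rw [show (Q x · N) = (Q y · N) ∘ Φ from funext hΦ]
    exact (hd.hasFDerivAt.comp v hS).fderiv
  have hclose := (hrec x v).norm_sub_le_of_eq_at (hrec y (Φ v)) hh hL0 hlip hsmall (hΦ v)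
  rw [hQ₀, hQ₀] at hclose
  have hAx := hjx.norm_sub_smul_one_le hh (fun _ => hL _) hsmall hAx₀ hBx₀ N le_rfl
  have hAy := hjy.norm_sub_smul_one_le hh (fun _ => hL _) hsmall hAy₀ hBy₀ N le_rfl
  have hAxy₁ := norm_sub_le_norm_sub_add_norm_sub (fderiv ℝ (Q x · N) v) ((N * h) • 1)
    (fderiv ℝ (Q y · N) (Φ v))
  rw [norm_sub_rev ((N * h) • 1)] at hAxy₁
  have hAxy₂ := hjx.norm_sub_le_of_norm_sub_le hjy hh (fun _ => hL _) (fun _ => hL _)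
    (fun k hk => norm_sub_le_mul_of_lipschitz hLH (hclose k hk)) hsmall hAx₀ hBx₀ hAy₀ hBy₀
  have hS₁ := norm_sub_one_le_of_eq_comp hcomp hAy
  have hxy : 0 ≤ LH * ‖x - y‖ * (N * h) ^ 2 :=
    mul_nonneg ((norm_nonneg _).trans (hLH x y)) (sq_nonneg _)
  rw [mul_min_of_nonneg _ _ (by norm_num : (0 : ℝ) ≤ 1 / 2), mul_one]
  refine le_min ?_ ?_
  · nlinarith [norm_nonneg (S - 1)]
  · nlinarith [norm_nonneg (S - 1)]

end Matching

theorem oneshot_jacobian_bound_general {d : ℕ}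
    (gradU : EuclideanSpace ℝ (Fin d) → EuclideanSpace ℝ (Fin d))
    (hess : EuclideanSpace ℝ (Fin d) →
      (EuclideanSpace ℝ (Fin d) →L[ℝ] EuclideanSpace ℝ (Fin d)))
    (L LH T h : ℝ) (N : ℕ)
    (hhess : ∀ x, HasFDerivAt gradU (hess x) x)
    (hL : ∀ x, ‖hess x‖ ≤ L)
    (hLH : ∀ x y, ‖hess x - hess y‖ ≤ LH * ‖x - y‖)
    (hT : 0 < T) (hh : 0 < h) (hTh : T = N * h)
    (hsmall : L * (T^2 + T * h) ≤ 1/6)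
    (q w : EuclideanSpace ℝ (Fin d) → EuclideanSpace ℝ (Fin d) → ℝ →
      EuclideanSpace ℝ (Fin d))
    (hq : ∀ x v t, q x v t = x + ∫ s in (0:ℝ)..t,
      (w x v (gridFloor h s) - (s - gridFloor h s) • gradU (q x v (gridFloor h s))))
    (hw : ∀ x v t, w x v t = v - (1/2 : ℝ) • ∫ s in (0:ℝ)..t,
      (gradU (q x v (gridFloor h s)) + gradU (q x v (gridCeil h s))))
    (x y : EuclideanSpace ℝ (Fin d))
    (Φ : EuclideanSpace ℝ (Fin d) → EuclideanSpace ℝ (Fin d))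
    (Φ' : EuclideanSpace ℝ (Fin d) →
      (EuclideanSpace ℝ (Fin d) →L[ℝ] EuclideanSpace ℝ (Fin d)))
    (hΦ' : ∀ v, HasFDerivAt Φ (Φ' v) v)
    (hΦ : ∀ v, q x v T = q y (Φ v) T) :
    ∀ v, ‖Φ' v - ContinuousLinearMap.id ℝ (EuclideanSpace ℝ (Fin d))‖ ≤
      (1/2) * min 1 (11 * LH * T^2 * ‖x - y‖) := by
  intro v
  subst hTh
  have hL0 : 0 ≤ L := (norm_nonneg _).trans (hL 0)
  have hsmall' : L * (N * h) ^ 2 ≤ 1 / 6 := by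
    nlinarith [mul_nonneg (mul_nonneg hL0 hT.le) hh.le]
  exact norm_sub_one_le_of_verlet_matching hhess hL hLH hT hsmall'
    (Q := fun z u k => q z u (k * h)) (V := fun z u k => w z u (k * h))
    (fun z u => isVerletRecursion_of_eq_integral gradU hh (hq z u) (hw z u))
    (fun z u => by simp only [Nat.cast_zero, zero_mul]; rw [hq, integral_same, add_zero])
    (fun z u => by simp only [Nat.cast_zero, zero_mul]; rw [hw, integral_same, smul_zero, sub_zero])
    (hΦ' v) hΦ

/-- One-shot coupling bound for the Jacobian of the velocity matching map `Φ`
defined by `q̃_T(x,v) = q̃_T(y, Φ(v))` (Lemma `oneshot:1:b`):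
`‖DΦ(v) − I_d‖ ≤ (1/2) min(1, 11 L_H T² ‖x − y‖)`. -/
theorem oneshot_jacobian_bound {d : ℕ}
    (U : EuclideanSpace ℝ (Fin d) → ℝ)
    (gradU : EuclideanSpace ℝ (Fin d) → EuclideanSpace ℝ (Fin d))
    (hess : EuclideanSpace ℝ (Fin d) →
      (EuclideanSpace ℝ (Fin d) →L[ℝ] EuclideanSpace ℝ (Fin d)))
    (L LH T h : ℝ) (N : ℕ)
    (hmin : ∀ x, U 0 ≤ U x) (hU0 : U 0 = 0)
    (hgrad : ∀ x, HasFDerivAt U ((innerSL ℝ) (gradU x)) x)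
    (hhess : ∀ x, HasFDerivAt gradU (hess x) x)
    (hL : ∀ x, ‖hess x‖ ≤ L)
    (hLH : ∀ x y, ‖hess x - hess y‖ ≤ LH * ‖x - y‖)
    (hT : 0 < T) (hh : 0 < h) (hN : 0 < N) (hTh : T = N * h)
    (hsmall : L * (T^2 + T * h) ≤ 1/6)
    (q w : EuclideanSpace ℝ (Fin d) → EuclideanSpace ℝ (Fin d) → ℝ →
      EuclideanSpace ℝ (Fin d))
    (hq : ∀ x v t, q x v t = x + ∫ s in (0:ℝ)..t,
      (w x v (gridFloor h s) - (s - gridFloor h s) • gradU (q x v (gridFloor h s))))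
    (hw : ∀ x v t, w x v t = v - (1/2 : ℝ) • ∫ s in (0:ℝ)..t,
      (gradU (q x v (gridFloor h s)) + gradU (q x v (gridCeil h s))))
    (x y : EuclideanSpace ℝ (Fin d))
    (Φ : EuclideanSpace ℝ (Fin d) → EuclideanSpace ℝ (Fin d))
    (Φ' : EuclideanSpace ℝ (Fin d) →
      (EuclideanSpace ℝ (Fin d) →L[ℝ] EuclideanSpace ℝ (Fin d)))
    (hΦ' : ∀ v, HasFDerivAt Φ (Φ' v) v)
    (hΦ : ∀ v, q x v T = q y (Φ v) T) :
    ∀ v, ‖Φ' v - ContinuousLinearMap.id ℝ (EuclideanSpace ℝ (Fin d))‖ ≤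
      (1/2) * min 1 (11 * LH * T^2 * ‖x - y‖) :=
  oneshot_jacobian_bound_general gradU hess L LH T h N hhess hL hLH hT hh hTh hsmall q w hq hw x y Φ
    Φ' hΦ' hΦ
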